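/- arXiv:2509.01479 — 3 statements merged into one kernel-verified Lean document; each statement's English description precedes it below -/
import Mathlib

section
/- Let 𝓔 = (T, Ω, Act) be an extended transition system, π a trace, i ∈ ℕ a time point, ψ an effect, and A ⊆ B ⊆ Act two sets of actions. Then the cause over A is exactly the set of A-projections of those members of the cause over B that agree with π on B ∖ A: Cause(ψ, π, i, A) = { π″|_A | π″ ∈ Cause(ψ, π, i, B) and π =_{B∖A} π″ }. -/
/-- A transition system `T = (S, S₀, Δ, AP, Λ)`. -/
structure TransSys (S AP : Type*) where
  init : Set S
  delta : S → Set S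
  delta_nonempty : ∀ s, (delta s).Nonempty
  label : S → S → Set AP

namespace TransSys

variable {S AP : Type*}

/-- A path is an infinite sequence of states following the transition function. -/
def IsPath (T : TransSys S AP) (ρ : ℕ → S) : Prop :=
  ∀ i, ρ (i + 1) ∈ T.delta (ρ i)

/-- The trace of a path is the sequence of its edge labels. -/
def traceOf (T : TransSys S AP) (ρ : ℕ → S) : ℕ → Set AP :=
  fun i => T.label (ρ i) (ρ (i + 1))

/-- `Π(T)`: the traces of initial paths. -/
def Traces (T : TransSys S AP) : Set (ℕ → Set AP) :=
  { π | ∃ ρ : ℕ → S, ρ 0 ∈ T.init ∧ T.IsPath ρ ∧ π = T.traceOf ρ }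

end TransSys

variable {S AP AG : Type*}

/-- `π =_A π′` : agreement on `A` at every time point. -/
def agreeOn (A : Set AP) (π π' : ℕ → Set AP) : Prop :=
  ∀ i, π i ∩ A = π' i ∩ A

/-- `π|_A` : projection of a trace to `A`. -/
def restrictTo (A : Set AP) (π : ℕ → Set AP) : ℕ → Set AP :=
  fun i => π i ∩ A

/-- `π ⊕_A π′` : trace-wide symmetric difference restricted to `A`. -/
def symDiff (A : Set AP) (π π' : ℕ → Set AP) : Set (AP × ℕ) :=
  { q | q.1 ∈ A ∧ q.1 ∈ (π q.2 \ π' q.2) ∪ (π' q.2 \ π q.2) }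

/-- `π′ ≤^A_{base} π″` : `π′` is at least as similar to `base` as `π″`, over `A`. -/
def simLE (A : Set AP) (base π' π'' : ℕ → Set AP) : Prop :=
  symDiff A π' base ⊆ symDiff A π'' base

/-- An extended transition system `𝓔 = (T, Ω, Act)`. -/
structure ExtTransSys (S AP AG : Type*) extends TransSys S AP where
  obs : AG → Set AP
  actMap : AG → Set AP
  act_sub_obs : ∀ a, actMap a ⊆ obs a
  act_total : ∀ (s : S) (A : Set AP), A ⊆ (⋃ a, actMap a) →
    ∃ s' ∈ delta s, label s s' ∩ (⋃ a, actMap a) = A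

namespace ExtTransSys

/-- The set of all actions. -/
def Act (E : ExtTransSys S AP AG) : Set AP := ⋃ a, E.actMap a

/-- The temporal cause `Cause(ψ, π, i, A)` of effect `ψ` on trace `π` at time `i` over
actions `A`. -/
def Cause (E : ExtTransSys S AP AG) (ψ : (ℕ → Set AP) → ℕ → Prop)
    (π : ℕ → Set AP) (i : ℕ) (A : Set AP) : Set (ℕ → Set AP) :=
  { π' | (∀ j, π' j ⊆ A) ∧
      ∀ π'' ∈ E.toTransSys.Traces, simLE A π π'' π' → agreeOn (E.Act \ A) π π'' →
        ψ π'' i }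

/-- `π` and `π′` are `a`-indistinguishable up to time `i`. -/
def Indist (E : ExtTransSys S AP AG) (a : AG) (i : ℕ) (π π' : ℕ → Set AP) : Prop :=
  ∀ j ≤ i, π j ∩ E.obs a = π' j ∩ E.obs a

/-- Deterministic extended transition system: unique initial state and for every state and
action set exactly one matching successor. -/
def Deterministic (E : ExtTransSys S AP AG) : Prop :=
  (∃ s₀ : S, E.init = {s₀}) ∧
  ∀ (s : S) (A : Set AP), A ⊆ E.Act →
    ∃! s' : S, s' ∈ E.delta s ∧ E.label s s' ∩ E.Act = A

end ExtTransSys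

/-!
A trace `τ` that agrees with `π` on `Act ∖ A` cannot differ from `π` on `B ∖ A`, so for such
traces the similarity orders over `A` and over `B` compare `τ` with `π` at the same positions.
Hence the `A`-projection of a cause over `B` is a cause over `A`; conversely a cause `p` over `A`
becomes a cause over `B` that agrees with `π` on `B ∖ A` once it is filled with `π` there, and
its `A`-projection is `p` again.
-/

section Traces

variable {A B C D : Set AP} {p π σ τ : ℕ → Set AP}

theorem mem_symDiff {q : AP × ℕ} :
    q ∈ symDiff A σ τ ↔ q.1 ∈ A ∧ ¬(q.1 ∈ σ q.2 ↔ q.1 ∈ τ q.2) := by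
  simp only [symDiff, Set.mem_ofPred_eq, Set.mem_union, Set.mem_sdiff]
  tauto

theorem agreeOn_iff : agreeOn A σ τ ↔ ∀ a ∈ A, ∀ j, (a ∈ σ j ↔ a ∈ τ j) := by
  simp only [agreeOn, Set.ext_iff, Set.mem_inter_iff]
  grind

theorem agreeOn.mono (hAB : A ⊆ B) (h : agreeOn B σ τ) : agreeOn A σ τ := by
  rw [agreeOn_iff] at h ⊢
  exact fun a ha => h a (hAB ha)

theorem symDiff_restrictTo : symDiff A (restrictTo A σ) τ = symDiff A σ τ := by
  ext q
  simp only [mem_symDiff, restrictTo, Set.mem_inter_iff]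
  grind

theorem simLE_restrictTo_and_agreeOn (hAB : A ⊆ B) (hσ : agreeOn (B \ A) π σ)
    (hsim : simLE B π τ σ) (hout : agreeOn (C \ B) π τ) :
    simLE A π τ (restrictTo A σ) ∧ agreeOn (C \ A) π τ := by
  simp only [simLE, symDiff_restrictTo, Set.subset_def, Prod.forall, mem_symDiff,
    agreeOn_iff, Set.mem_sdiff] at hσ hsim hout ⊢
  refine ⟨fun a j ⟨ha, hne⟩ => ⟨ha, (hsim a j ⟨hAB ha, hne⟩).2⟩, fun a ⟨haC, haA⟩ j => ?_⟩
  by_cases haB : a ∈ B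
  · by_contra hne
    exact (hsim a j ⟨haB, fun h => hne h.symm⟩).2 (hσ a ⟨haB, haA⟩ j).symm
  · exact hout a ⟨haC, haB⟩ j

theorem simLE_and_agreeOn_of_restrictTo (hAB : A ⊆ B) (hBC : B ⊆ C)
    (hsim : simLE A π τ (restrictTo A σ)) (hout : agreeOn (C \ A) π τ) :
    simLE B π τ σ ∧ agreeOn (C \ B) π τ := by
  refine ⟨?_, hout.mono (Set.sdiff_subset_sdiff_right hAB)⟩
  simp only [simLE, symDiff_restrictTo, Set.subset_def, Prod.forall, mem_symDiff,
    agreeOn_iff, Set.mem_sdiff] at hsim hout ⊢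
  refine fun a j ⟨haB, hne⟩ => ⟨haB, ?_⟩
  by_cases haA : a ∈ A
  · exact (hsim a j ⟨haA, hne⟩).2
  · exact absurd (hout a ⟨hBC haB, haA⟩ j).symm hne

def fillOn (D : Set AP) (p π : ℕ → Set AP) : ℕ → Set AP :=
  fun j => p j ∪ π j ∩ D

theorem restrictTo_fillOn (hp : ∀ j, p j ⊆ A) (hAD : Disjoint A D) :
    restrictTo A (fillOn D p π) = p := by
  funext j
  simp only [restrictTo, fillOn, Set.union_inter_distrib_right, Set.inter_eq_left.mpr (hp j),
    Set.inter_assoc, Set.disjoint_iff_inter_eq_empty.mp hAD.symm, Set.inter_empty,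
    Set.union_empty]

theorem agreeOn_fillOn (hp : ∀ j, Disjoint (p j) D) : agreeOn D π (fillOn D p π) := fun j => by
  rw [fillOn, Set.union_inter_distrib_right, Set.disjoint_iff_inter_eq_empty.mp (hp j),
    Set.empty_union, Set.inter_assoc, Set.inter_self]

theorem fillOn_subset (hp : ∀ j, p j ⊆ B) (hDB : D ⊆ B) (j : ℕ) : fillOn D p π j ⊆ B :=
  Set.union_subset (hp j) (Set.inter_subset_right.trans hDB)

end Traces

namespace ExtTransSys

variable {E : ExtTransSys S AP AG} {ψ : (ℕ → Set AP) → ℕ → Prop} {π p σ : ℕ → Set AP} {i : ℕ}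
  {A B : Set AP}

theorem restrictTo_mem_cause (hAB : A ⊆ B) (hB : B ⊆ E.Act) (hσ : σ ∈ E.Cause ψ π i B) :
    restrictTo A σ ∈ E.Cause ψ π i A :=
  ⟨fun _ => Set.inter_subset_right, fun τ hτ hsim hout =>
    let ⟨hsim', hout'⟩ := simLE_and_agreeOn_of_restrictTo hAB hB hsim hout
    hσ.2 τ hτ hsim' hout'⟩

theorem fillOn_mem_cause (hAB : A ⊆ B) (hp : p ∈ E.Cause ψ π i A) :
    fillOn (B \ A) p π ∈ E.Cause ψ π i B := by
  refine ⟨fillOn_subset (fun j => (hp.1 j).trans hAB) Set.sdiff_subset, fun τ hτ hsim hout => ?_⟩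
  have hagree : agreeOn (B \ A) π (fillOn (B \ A) p π) :=
    agreeOn_fillOn fun j => Set.disjoint_sdiff_right.mono_left (hp.1 j)
  obtain ⟨hsim', hout'⟩ := simLE_restrictTo_and_agreeOn hAB hagree hsim hout
  rw [restrictTo_fillOn hp.1 Set.disjoint_sdiff_right] at hsim'
  exact hp.2 τ hτ hsim' hout'

end ExtTransSys

theorem cause_restrict_eq_image_general
    (E : ExtTransSys S AP AG) (ψ : (ℕ → Set AP) → ℕ → Prop)
    (π : ℕ → Set AP) (i : ℕ) (A B : Set AP) (hAB : A ⊆ B) (hB : B ⊆ E.Act) :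
    E.Cause ψ π i A =
      restrictTo A '' { π'' ∈ E.Cause ψ π i B | agreeOn (B \ A) π π'' } := by
  ext p
  constructor
  · intro hp
    exact ⟨fillOn (B \ A) p π,
      ⟨ExtTransSys.fillOn_mem_cause hAB hp,
        agreeOn_fillOn fun j => Set.disjoint_sdiff_right.mono_left (hp.1 j)⟩,
      restrictTo_fillOn hp.1 Set.disjoint_sdiff_right⟩
  · rintro ⟨σ, ⟨hσ, -⟩, rfl⟩
    exact ExtTransSys.restrictTo_mem_cause hAB hB hσ

/-- `Cause(ψ, π, i, A)` is exactly the set of `A`-projections of the members of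
`Cause(ψ, π, i, B)` that agree with `π` on `B ∖ A`. -/
theorem cause_restrict_eq_image [Finite S] [Finite AP] [Finite AG]
    (E : ExtTransSys S AP AG) (ψ : (ℕ → Set AP) → ℕ → Prop)
    (π : ℕ → Set AP) (i : ℕ) (A B : Set AP) (hAB : A ⊆ B) (hB : B ⊆ E.Act) :
    E.Cause ψ π i A =
      restrictTo A '' { π'' ∈ E.Cause ψ π i B | agreeOn (B \ A) π π'' } :=
  cause_restrict_eq_image_general E ψ π i A B hAB hB
end

section
/- (Proposition: explanations imply knowledge.) Let 𝓔 = (T, Ω, Act) be a deterministic extended transition system, a an agent, π ∈ Π(T), i ∈ ℕ, A ⊆ Act, and ψ an effect. Suppose π,i ⊨ ψ and there exists T₀ ⊆ (2^A)^ω such that T₀ = Cause(ψ, π′, i, A) for every trace π′ ∈ Π(T) that is a-indistinguishable from π up to i. Then agent a knows ψ at (π, i): every trace π′ ∈ Π(T) that is a-indistinguishable from π up to i satisfies π′,i ⊨ ψ. -/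
variable {S AP AG : Type*}

/-!
In a deterministic system a trace is determined by its actions, so the only trace that agrees
with `π` on `A` and on `Act \ A` is `π` itself; hence `π|_A` is a cause of `ψ` on `π` as soon as
`π, i ⊨ ψ`. Conversely, any cause of `ψ` on a trace `π′` forces `π′, i ⊨ ψ`, since `π′` is
trivially at least as close to itself as the cause is. As the cause sets on `π` and on every
`a`-indistinguishable `π′` are the same `T₀`, `π|_A` is a cause on `π′`, and `π′, i ⊨ ψ`.
-/

section Traces

variable {A B : Set AP} {π π' : ℕ → Set AP}

theorem symDiff_self (A : Set AP) (π : ℕ → Set AP) : symDiff A π π = ∅ := by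
  ext q
  simp [symDiff]

theorem symDiff_restrictTo_self (A : Set AP) (π : ℕ → Set AP) :
    symDiff A (restrictTo A π) π = ∅ := by
  ext q
  simp only [symDiff, restrictTo, Set.mem_ofPred_eq, Set.mem_union, Set.mem_sdiff,
    Set.mem_inter_iff, Set.mem_empty_iff_false, iff_false]
  tauto

theorem agreeOn_of_symDiff_eq_empty (h : symDiff A π π' = ∅) : agreeOn A π π' := by
  intro j
  ext p
  have hp : (p, j) ∉ symDiff A π π' := h ▸ Set.notMem_empty _
  simp only [symDiff, Set.mem_ofPred_eq, Set.mem_union, Set.mem_sdiff, not_and] at hp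
  simp only [Set.mem_inter_iff]
  tauto

theorem agreeOn.symm (h : agreeOn A π π') : agreeOn A π' π :=
  fun j => (h j).symm

theorem agreeOn.mono_s3 (hBA : B ⊆ A) (h : agreeOn A π π') : agreeOn B π π' := by
  intro j
  rw [← Set.inter_eq_right.mpr hBA, ← Set.inter_assoc, h j, Set.inter_assoc]

theorem agreeOn.union (hA : agreeOn A π π') (hB : agreeOn B π π') :
    agreeOn (A ∪ B) π π' := by
  intro j
  rw [Set.inter_union_distrib_left, Set.inter_union_distrib_left, hA j, hB j]

end Traces

namespace ExtTransSys

variable {E : ExtTransSys S AP AG} {ψ : (ℕ → Set AP) → ℕ → Prop} {A : Set AP} {i : ℕ}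
  {π τ : ℕ → Set AP}

theorem Deterministic.path_eq (hdet : E.Deterministic) {ρ σ : ℕ → S}
    (hρ0 : ρ 0 ∈ E.init) (hσ0 : σ 0 ∈ E.init) (hρ : E.IsPath ρ) (hσ : E.IsPath σ)
    (hact : agreeOn E.Act (E.traceOf ρ) (E.traceOf σ)) : ρ = σ := by
  obtain ⟨⟨s₀, hinit⟩, hsucc⟩ := hdet
  funext j
  induction j with
  | zero =>
    rw [hinit] at hρ0 hσ0
    exact hρ0.trans hσ0.symm
  | succ j ih =>
    obtain ⟨_, -, huniq⟩ :=
      hsucc (ρ j) (E.label (ρ j) (ρ (j + 1)) ∩ E.Act) Set.inter_subset_right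
    have hlabel := hact j
    simp only [TransSys.traceOf, ← ih] at hlabel
    have hσ_step : σ (j + 1) ∈ E.delta (ρ j) ∧
        E.label (ρ j) (σ (j + 1)) ∩ E.Act = E.label (ρ j) (ρ (j + 1)) ∩ E.Act :=
      ⟨ih ▸ hσ j, hlabel.symm⟩
    exact (huniq _ ⟨hρ j, rfl⟩).trans (huniq _ hσ_step).symm

theorem Deterministic.trace_eq (hdet : E.Deterministic) {π π' : ℕ → Set AP}
    (hπ : π ∈ E.Traces) (hπ' : π' ∈ E.Traces) (hact : agreeOn E.Act π π') : π = π' := by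
  obtain ⟨ρ, hρ0, hρ, rfl⟩ := hπ
  obtain ⟨σ, hσ0, hσ, rfl⟩ := hπ'
  rw [hdet.path_eq hρ0 hσ0 hρ hσ hact]

theorem of_mem_Cause (hπ : π ∈ E.Traces) (hτ : τ ∈ E.Cause ψ π i A) : ψ π i :=
  hτ.2 π hπ (by simp only [simLE, symDiff_self, Set.empty_subset]) fun _ => rfl

theorem Deterministic.restrictTo_mem_Cause (hdet : E.Deterministic) (hπ : π ∈ E.Traces)
    (hψ : ψ π i) : restrictTo A π ∈ E.Cause ψ π i A := by
  refine ⟨fun _ => Set.inter_subset_right, fun π'' hπ'' hsim hrest => ?_⟩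
  have hsame : symDiff A π'' π = ∅ :=
    Set.subset_empty_iff.mp (symDiff_restrictTo_self A π ▸ hsim)
  have hact : agreeOn E.Act π π'' :=
    ((agreeOn_of_symDiff_eq_empty hsame).symm.union hrest).mono_s3 le_sup_sdiff
  rwa [← hdet.trace_eq hπ hπ'' hact]

end ExtTransSys

theorem explanation_implies_knowledge_general
    (E : ExtTransSys S AP AG) (hdet : E.Deterministic) (a : AG)
    (π : ℕ → Set AP) (hπ : π ∈ E.toTransSys.Traces) (i : ℕ)
    (A : Set AP) (ψ : (ℕ → Set AP) → ℕ → Prop)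
    (hψ : ψ π i)
    (hK : ∃ T₀ : Set (ℕ → Set AP), (∀ τ ∈ T₀, ∀ j, τ j ⊆ A) ∧
      ∀ π' ∈ E.toTransSys.Traces, E.Indist a i π π' → T₀ = E.Cause ψ π' i A) :
    ∀ π' ∈ E.toTransSys.Traces, E.Indist a i π π' → ψ π' i := by
  obtain ⟨T₀, -, hT₀⟩ := hK
  intro π' hπ' hind
  have hcause : restrictTo A π ∈ E.Cause ψ π' i A := by
    rw [← hT₀ π' hπ' hind, hT₀ π hπ fun _ _ => rfl]
    exact hdet.restrictTo_mem_Cause hπ hψ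
  exact ExtTransSys.of_mem_Cause hπ' hcause

/-- in a deterministic system, explanations imply knowledge of the effect. -/
theorem explanation_implies_knowledge [Finite S] [Finite AP] [Finite AG]
    (E : ExtTransSys S AP AG) (hdet : E.Deterministic) (a : AG)
    (π : ℕ → Set AP) (hπ : π ∈ E.toTransSys.Traces) (i : ℕ)
    (A : Set AP) (hA : A ⊆ E.Act) (ψ : (ℕ → Set AP) → ℕ → Prop)
    (hψ : ψ π i)
    (hK : ∃ T₀ : Set (ℕ → Set AP), (∀ τ ∈ T₀, ∀ j, τ j ⊆ A) ∧
      ∀ π' ∈ E.toTransSys.Traces, E.Indist a i π π' → T₀ = E.Cause ψ π' i A) :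
    ∀ π' ∈ E.toTransSys.Traces, E.Indist a i π π' → ψ π' i :=
  explanation_implies_knowledge_general E hdet a π hπ i A ψ hψ hK
end

section
/- (Cause as largest downward-closed set.) Let 𝓔 = (T, Ω, Act) be an extended transition system, π a trace, i ∈ ℕ, A ⊆ Act, and ψ an effect. Then Cause(ψ, π, i, A) is the largest set C ⊆ (2^A)^ω satisfying both: (1) C is downward closed with respect to ≤^A_π (ρ ∈ C and ρ′ ≤^A_π ρ with ρ′ ∈ (2^A)^ω imply ρ′ ∈ C), and (2) every trace π″ ∈ Π(T) with π =_{Act∖A} π″ and π″|_A ∈ C satisfies π″,i ⊨ ψ. That is, Cause(ψ, π, i, A) itself has properties (1) and (2), and every set C ⊆ (2^A)^ω with properties (1) and (2) is contained in Cause(ψ, π, i, A). -/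
variable {S AP AG : Type*}

section

variable {A : Set AP} {base π π' π'' : ℕ → Set AP}

@[simp]
theorem symDiff_restrictTo_left : symDiff A (restrictTo A π) π' = symDiff A π π' := by
  ext ⟨a, j⟩
  simp only [symDiff, restrictTo, Set.mem_ofPred_eq, Set.mem_union, Set.mem_sdiff,
    Set.mem_inter_iff]
  tauto

theorem simLE.trans (h : simLE A base π π') (h' : simLE A base π' π'') :
    simLE A base π π'' :=
  Set.Subset.trans h h'

@[simp]
theorem simLE_restrictTo_left_iff : simLE A base (restrictTo A π) π' ↔ simLE A base π π' := by
  rw [simLE, simLE, symDiff_restrictTo_left]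

theorem simLE_restrictTo_right : simLE A base π (restrictTo A π) := by
  rw [simLE, symDiff_restrictTo_left]

namespace ExtTransSys

variable (E : ExtTransSys S AP AG) (ψ : (ℕ → Set AP) → ℕ → Prop) (i : ℕ)

theorem mem_Cause_of_simLE {ρ ρ' : ℕ → Set AP} (hρ : ρ ∈ E.Cause ψ π i A)
    (hρ'A : ∀ j, ρ' j ⊆ A) (hle : simLE A π ρ' ρ) : ρ' ∈ E.Cause ψ π i A :=
  ⟨hρ'A, fun π'' hπ'' hle' hagree => hρ.2 π'' hπ'' (hle'.trans hle) hagree⟩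

theorem effect_of_restrictTo_mem_Cause (hπ'' : π'' ∈ E.toTransSys.Traces)
    (hagree : agreeOn (E.Act \ A) π π'') (hmem : restrictTo A π'' ∈ E.Cause ψ π i A) :
    ψ π'' i :=
  hmem.2 π'' hπ'' simLE_restrictTo_right hagree

theorem subset_Cause {C : Set (ℕ → Set AP)} (hCA : ∀ ρ ∈ C, ∀ j, ρ j ⊆ A)
    (hdown : ∀ ρ ∈ C, ∀ ρ' : ℕ → Set AP, (∀ j, ρ' j ⊆ A) → simLE A π ρ' ρ → ρ' ∈ C)
    (heffect : ∀ π'' ∈ E.toTransSys.Traces, agreeOn (E.Act \ A) π π'' →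
      restrictTo A π'' ∈ C → ψ π'' i) :
    C ⊆ E.Cause ψ π i A := fun ρ hρ =>
  ⟨hCA ρ hρ, fun π'' hπ'' hle hagree => heffect π'' hπ'' hagree <|
    hdown ρ hρ _ (fun _ => Set.inter_subset_right) (simLE_restrictTo_left_iff.2 hle)⟩

end ExtTransSys

end

theorem cause_largest_downward_closed_general
    (E : ExtTransSys S AP AG) (ψ : (ℕ → Set AP) → ℕ → Prop)
    (π : ℕ → Set AP) (i : ℕ) (A : Set AP) :
    ((∀ ρ ∈ E.Cause ψ π i A, ∀ ρ' : ℕ → Set AP, (∀ j, ρ' j ⊆ A) → simLE A π ρ' ρ →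
        ρ' ∈ E.Cause ψ π i A) ∧
      (∀ π'' ∈ E.toTransSys.Traces, agreeOn (E.Act \ A) π π'' →
        restrictTo A π'' ∈ E.Cause ψ π i A → ψ π'' i)) ∧
    (∀ C : Set (ℕ → Set AP), (∀ ρ ∈ C, ∀ j, ρ j ⊆ A) →
      (∀ ρ ∈ C, ∀ ρ' : ℕ → Set AP, (∀ j, ρ' j ⊆ A) → simLE A π ρ' ρ → ρ' ∈ C) →
      (∀ π'' ∈ E.toTransSys.Traces, agreeOn (E.Act \ A) π π'' →
        restrictTo A π'' ∈ C → ψ π'' i) →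
      C ⊆ E.Cause ψ π i A) :=
  ⟨⟨fun _ hρ _ => E.mem_Cause_of_simLE ψ i hρ,
      fun _ => E.effect_of_restrictTo_mem_Cause ψ i⟩,
    fun _ => E.subset_Cause ψ i⟩

/-- `Cause(ψ, π, i, A)` is the largest subset of `(2^A)^ω` that is downward
closed w.r.t. `≤^A_π` and such that every system trace agreeing with `π` outside `A` whose
`A`-projection lies in the set satisfies the effect. -/
theorem cause_largest_downward_closed [Finite S] [Finite AP] [Finite AG]
    (E : ExtTransSys S AP AG) (ψ : (ℕ → Set AP) → ℕ → Prop)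
    (π : ℕ → Set AP) (i : ℕ) (A : Set AP) (hA : A ⊆ E.Act) :
    ((∀ ρ ∈ E.Cause ψ π i A, ∀ ρ' : ℕ → Set AP, (∀ j, ρ' j ⊆ A) → simLE A π ρ' ρ →
        ρ' ∈ E.Cause ψ π i A) ∧
      (∀ π'' ∈ E.toTransSys.Traces, agreeOn (E.Act \ A) π π'' →
        restrictTo A π'' ∈ E.Cause ψ π i A → ψ π'' i)) ∧
    (∀ C : Set (ℕ → Set AP), (∀ ρ ∈ C, ∀ j, ρ j ⊆ A) →
      (∀ ρ ∈ C, ∀ ρ' : ℕ → Set AP, (∀ j, ρ' j ⊆ A) → simLE A π ρ' ρ → ρ' ∈ C) →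
      (∀ π'' ∈ E.toTransSys.Traces, agreeOn (E.Act \ A) π π'' →
        restrictTo A π'' ∈ C → ψ π'' i) →
      C ⊆ E.Cause ψ π i A) :=
  cause_largest_downward_closed_general E ψ π i A
end
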